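/- arXiv:2101.07276 — 4 statements merged into one kernel-verified Lean document; each statement's English description precedes it below -/
import Mathlib

section
/- Let A be a linear operator on H_N that commutes with Π^x and satisfies Π^z A Π^z = εA for some ε ∈ {+1,−1} (as holds for any product of Pauli operators commuting with Π^x). Then |⟨g_1| A |g_2⟩| ≤ |⟨s_{p_1}| A |s_{p_2}⟩|. -/
open Complex BigOperators Finset

namespace SpinChain

/-- Spin configurations on `N` sites (sites mod `N`): `true` = +1, `false` = −1. -/
abbrev Config (N : ℕ) := ZMod N → Bool

/-- The Hilbert space `H_N`: complex functions on spin configurations. -/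
abbrev HS (N : ℕ) := Config N → ℂ

/-- The ±1 value of a spin. -/
def sgn (b : Bool) : ℂ := if b then 1 else -1

/-- Standard basis vector `e_s`. -/
def basis (N : ℕ) [NeZero N] (s : Config N) : HS N := fun t => if t = s then 1 else 0

/-- Inner product `⟨f|g⟩ = ∑_s conj (f s) * g s` (antilinear in the first argument). -/
noncomputable def braket (N : ℕ) [NeZero N] (f g : HS N) : ℂ :=
  ∑ s, (starRingEnd ℂ) (f s) * g s

/-- Flip the spin at site `j`. -/
def flipAt (N : ℕ) (j : ZMod N) (s : Config N) : Config N :=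
  Function.update s j (!(s j))

/-- Pauli operator σ^x_j : acts diagonally, `σ^x_j e_s = s(j) e_s`. -/
def sigmaX (N : ℕ) (j : ZMod N) : Module.End ℂ (HS N) where
  toFun f := fun s => sgn (s j) * f s
  map_add' f g := by funext s; simp [mul_add]
  map_smul' c f := by funext s; simp [smul_eq_mul]; ring

/-- Pauli operator σ^z_j : flips the spin at site `j`, `σ^z_j e_s = e_{s'}`. -/
def sigmaZ (N : ℕ) (j : ZMod N) : Module.End ℂ (HS N) where
  toFun f := fun s => f (flipAt N j s)
  map_add' _ _ := rfl
  map_smul' _ _ := rfl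

/-- Pauli operator σ^y_j = i σ^x_j σ^z_j. -/
noncomputable def sigmaY (N : ℕ) (j : ZMod N) : Module.End ℂ (HS N) :=
  Complex.I • (sigmaX N j * sigmaZ N j)

/-- Kinds of single-site operators: the identity and the three Pauli matrices. -/
inductive PKind | id | x | y | z
  deriving DecidableEq

/-- Single-site operator of a given kind at site `j`. -/
noncomputable def pauli (N : ℕ) : PKind → ZMod N → Module.End ℂ (HS N)
  | PKind.id => fun _ => 1
  | PKind.x => sigmaX N
  | PKind.y => sigmaY N
  | PKind.z => sigmaZ N

/-- Parity operator Π^α = σ^α_1 σ^α_2 ⋯ σ^α_N. -/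
noncomputable def parity (N : ℕ) (α : PKind) : Module.End ℂ (HS N) :=
  ((List.range N).map (fun j => pauli N α ((j + 1 : ℕ) : ZMod N))).prod

/-- The configuration of the kink state |j⟩: `s(j+r) = (−1)^{r+1}` for `r = 1,…,N`
(the single ferromagnetic bond is between sites `j` and `j+1`). -/
def kinkConfig (N : ℕ) (j : ZMod N) : Config N :=
  fun k => ((k - j).val == 0) || ((k - j).val % 2 == 1)

/-- Kink state |j⟩. -/
def kink (N : ℕ) [NeZero N] (j : ZMod N) : HS N := basis N (kinkConfig N j)

/-- Momentum state `|s_p⟩ = N^{-1/2} ∑_{j=1}^N e^{i p j} |j⟩`. -/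
noncomputable def momState (N : ℕ) [NeZero N] (p : ℝ) : HS N :=
  (Real.sqrt N : ℂ)⁻¹ • ∑ j ∈ Finset.range N,
    Complex.exp (Complex.I * p * ((j : ℂ) + 1)) • kink N ((j + 1 : ℕ) : ZMod N)

/-! The kink states all have the same `Π^x`-eigenvalue `c = ±1`, so `Π^x |s_p⟩ = c |s_p⟩`, while
for odd `N` the operator `Π^z` anticommutes with `Π^x`, so `Π^x Π^z |s_p⟩ = -c Π^z |s_p⟩`. As `A`
commutes with the self-adjoint `Π^x`, the vectors `Π^z |s_{p₁}⟩` and `A |s_{p₂}⟩` lie in different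
eigenspaces and are orthogonal; with `Π^z A Π^z = εA` this kills the cross terms, leaving
`⟨g₁|A|g₂⟩ = (ū₁u₂ + ε v̄₁v₂) ⟨s_{p₁}|A|s_{p₂}⟩`, and the prefactor has modulus at most `1`
by Cauchy–Schwarz. -/

section Braket

variable {N : ℕ} [NeZero N]

lemma braket_add_left (f g h : HS N) : braket N (f + g) h = braket N f h + braket N g h := by
  simp [braket, add_mul, Finset.sum_add_distrib]

lemma braket_add_right (f g h : HS N) : braket N f (g + h) = braket N f g + braket N f h := by
  simp [braket, mul_add, Finset.sum_add_distrib]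

lemma braket_smul_left (a : ℂ) (f g : HS N) :
    braket N (a • f) g = (starRingEnd ℂ) a * braket N f g := by
  simp [braket, Finset.mul_sum, mul_assoc]

lemma braket_smul_right (a : ℂ) (f g : HS N) : braket N f (a • g) = a * braket N f g := by
  simp [braket, Finset.mul_sum, mul_left_comm]

lemma braket_combination_apply (A : Module.End ℂ (HS N)) (a b a' b' : ℂ) (x y x' y' : HS N) :
    braket N (a • x + b • y) (A (a' • x' + b' • y')) =
      (starRingEnd ℂ) a * a' * braket N x (A x') + (starRingEnd ℂ) a * b' * braket N x (A y') +
        (starRingEnd ℂ) b * a' * braket N y (A x') +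
          (starRingEnd ℂ) b * b' * braket N y (A y') := by
  simp only [map_add, map_smul, braket_add_left, braket_add_right, braket_smul_left,
    braket_smul_right]
  ring

lemma braket_eq_zero_of_eigenvector {P : Module.End ℂ (HS N)}
    (hP : ∀ f g, braket N (P f) g = braket N f (P g)) {x y : HS N} {a b : ℂ}
    (hx : P x = a • x) (hy : P y = b • y) (hab : (starRingEnd ℂ) a ≠ b) : braket N x y = 0 := by
  have h : ((starRingEnd ℂ) a - b) * braket N x y = 0 := by
    rw [sub_mul, ← braket_smul_left, ← braket_smul_right, ← hx, ← hy, hP, sub_self]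
  exact (mul_eq_zero.mp h).resolve_left (sub_ne_zero.mpr hab)

end Braket

section Parity

variable {N : ℕ}

def sites (N : ℕ) : List (ZMod N) := (List.range N).map fun j => ((j + 1 : ℕ) : ZMod N)

lemma parity_eq_prod_sites (α : PKind) : parity N α = ((sites N).map (pauli N α)).prod := by
  rw [sites, List.map_map]
  rfl

lemma sites_nodup : (sites N).Nodup := by
  refine List.Nodup.map_on (fun a ha b hb hab => ?_) List.nodup_range
  rw [List.mem_range] at ha hb
  rw [Nat.cast_succ, Nat.cast_succ, add_left_inj, ZMod.natCast_eq_natCast_iff',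
    Nat.mod_eq_of_lt ha, Nat.mod_eq_of_lt hb] at hab
  exact hab

lemma list_prod_sigmaX_apply (l : List (ZMod N)) (f : HS N) (s : Config N) :
    (l.map (sigmaX N)).prod f s = (l.map fun j => sgn (s j)).prod * f s := by
  induction l with
  | nil => simp
  | cons a t ih =>
    simp only [List.map_cons, List.prod_cons, Module.End.mul_apply]
    rw [mul_assoc, ← ih]
    rfl

lemma list_prod_sigmaZ_apply {l : List (ZMod N)} (hl : l.Nodup) (f : HS N) (s : Config N) :
    (l.map (sigmaZ N)).prod f s = f fun k => if k ∈ l then !(s k) else s k := by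
  induction l generalizing s with
  | nil => simp
  | cons a t ih =>
    obtain ⟨hat, ht⟩ := List.nodup_cons.mp hl
    simp only [List.map_cons, List.prod_cons, Module.End.mul_apply]
    refine (ih ht _).trans (congrArg f (funext fun k => ?_))
    by_cases hka : k = a
    · subst hka
      simp [flipAt, hat]
    · simp [flipAt, hka]

variable [NeZero N]

lemma mem_sites (k : ZMod N) : k ∈ sites N :=
  List.mem_map.mpr ⟨(k - 1).val, List.mem_range.mpr (ZMod.val_lt _), by simp⟩

lemma parity_x_apply (f : HS N) (s : Config N) :
    parity N PKind.x f s = (∏ k, sgn (s k)) * f s := by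
  rw [parity_eq_prod_sites]
  refine (list_prod_sigmaX_apply _ f s).trans ?_
  rw [← List.prod_toFinset _ sites_nodup,
    Finset.eq_univ_of_forall fun k => List.mem_toFinset.mpr (mem_sites k)]

lemma parity_z_apply (f : HS N) (s : Config N) :
    parity N PKind.z f s = f fun k => !(s k) := by
  rw [parity_eq_prod_sites]
  exact (list_prod_sigmaZ_apply sites_nodup f s).trans (by simp only [mem_sites, if_true])

end Parity

section ParityOperators

variable {N : ℕ} [NeZero N]

lemma conj_sgn (b : Bool) : (starRingEnd ℂ) (sgn b) = sgn b := by
  cases b <;> simp [sgn]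

lemma sgn_not (b : Bool) : sgn (!b) = -sgn b := by
  cases b <;> simp [sgn]

lemma braket_parity_x_left (f g : HS N) :
    braket N (parity N PKind.x f) g = braket N f (parity N PKind.x g) := by
  refine Finset.sum_congr rfl fun s _ => ?_
  simp only [parity_x_apply, map_mul, map_prod, conj_sgn]
  ring

lemma parity_z_parity_z (f : HS N) : parity N PKind.z (parity N PKind.z f) = f := by
  funext s
  simp [parity_z_apply]

lemma braket_parity_z_parity_z (f g : HS N) :
    braket N (parity N PKind.z f) (parity N PKind.z g) = braket N f g := by
  simp only [braket, parity_z_apply]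
  exact Equiv.sum_comp (Equiv.piCongrRight fun _ : ZMod N => Equiv.boolNot)
    fun s => (starRingEnd ℂ) (f s) * g s

lemma braket_parity_z_left (f g : HS N) :
    braket N (parity N PKind.z f) g = braket N f (parity N PKind.z g) := by
  rw [← braket_parity_z_parity_z, parity_z_parity_z]

lemma parity_x_parity_z (hN : Odd N) (f : HS N) :
    parity N PKind.x (parity N PKind.z f) = -parity N PKind.z (parity N PKind.x f) := by
  funext s
  have hflip : ∏ k, sgn (!(s k)) = -∏ k, sgn (s k) := by
    simp only [sgn_not, Finset.prod_neg, Finset.card_univ, ZMod.card, hN.neg_one_pow, neg_one_mul]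
  simp only [Pi.neg_apply, parity_x_apply, parity_z_apply, hflip, neg_mul, neg_neg]

lemma apply_parity_z_of_parity_z_conj {A : Module.End ℂ (HS N)} {ε : ℂ}
    (hz : parity N PKind.z * A * parity N PKind.z = ε • A) (w : HS N) :
    A (parity N PKind.z w) = ε • parity N PKind.z (A w) := by
  have h := congrArg (parity N PKind.z) (LinearMap.congr_fun hz w)
  rwa [Module.End.mul_apply, Module.End.mul_apply, parity_z_parity_z, LinearMap.smul_apply,
    map_smul] at h

end ParityOperators

section Kinks

variable {N : ℕ} [NeZero N]

noncomputable def kinkParity (N : ℕ) [NeZero N] : ℂ := ∏ k : ZMod N, sgn (kinkConfig N 0 k)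

lemma prod_sgn_kinkConfig (j : ZMod N) : ∏ k, sgn (kinkConfig N j k) = kinkParity N :=
  Fintype.prod_equiv (Equiv.subRight j) (fun k => sgn (kinkConfig N j k)) _ fun k => by
    simp [kinkConfig]

lemma kinkParity_ne_zero : kinkParity N ≠ 0 :=
  Finset.prod_ne_zero_iff.mpr fun k _ => by cases kinkConfig N 0 k <;> simp [sgn]

lemma conj_kinkParity : (starRingEnd ℂ) (kinkParity N) = kinkParity N := by
  simp only [kinkParity, map_prod, conj_sgn]

lemma parity_x_basis (t : Config N) :
    parity N PKind.x (basis N t) = (∏ k, sgn (t k)) • basis N t := by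
  funext s
  by_cases h : s = t
  · subst h
    simp [parity_x_apply]
  · simp [parity_x_apply, basis, h]

lemma parity_x_momState (p : ℝ) :
    parity N PKind.x (momState N p) = kinkParity N • momState N p := by
  rw [momState, map_smul, map_sum, smul_comm (kinkParity N), Finset.smul_sum (r := kinkParity N)]
  congr 1
  refine Finset.sum_congr rfl fun j _ => ?_
  rw [map_smul, kink, parity_x_basis, prod_sgn_kinkConfig, smul_comm]

lemma braket_parity_z_momState_apply_momState {A : Module.End ℂ (HS N)} (hN : Odd N)
    (hcomm : A * parity N PKind.x = parity N PKind.x * A) (p q : ℝ) :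
    braket N (parity N PKind.z (momState N p)) (A (momState N q)) = 0 := by
  refine braket_eq_zero_of_eigenvector braket_parity_x_left (a := -kinkParity N)
    (b := kinkParity N) ?_ ?_ ?_
  · rw [parity_x_parity_z hN, parity_x_momState, map_smul, neg_smul]
  · rw [← Module.End.mul_apply, ← hcomm, Module.End.mul_apply, parity_x_momState, map_smul]
  · rw [map_neg, conj_kinkParity, ne_eq, neg_eq_iff_add_eq_zero, ← two_mul]
    exact mul_ne_zero two_ne_zero kinkParity_ne_zero

end Kinks

lemma norm_conj_mul_add_conj_mul_mul_le_one {u₁ v₁ u₂ v₂ ε : ℂ}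
    (h₁ : ‖u₁‖ ^ 2 + ‖v₁‖ ^ 2 ≤ 1) (h₂ : ‖u₂‖ ^ 2 + ‖v₂‖ ^ 2 ≤ 1) (hε : ‖ε‖ ≤ 1) :
    ‖(starRingEnd ℂ) u₁ * u₂ + (starRingEnd ℂ) v₁ * v₂ * ε‖ ≤ 1 := by
  calc _ ≤ ‖u₁‖ * ‖u₂‖ + ‖v₁‖ * ‖v₂‖ * ‖ε‖ :=
        (norm_add_le _ _).trans_eq (by simp only [norm_mul, Complex.norm_conj])
    _ ≤ ‖u₁‖ * ‖u₂‖ + ‖v₁‖ * ‖v₂‖ :=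
        add_le_add le_rfl (mul_le_of_le_one_right (by positivity) hε)
    _ ≤ 1 := by nlinarith [sq_nonneg (‖u₁‖ - ‖u₂‖), sq_nonneg (‖v₁‖ - ‖v₂‖)]

theorem statement_2_general (N : ℕ) [NeZero N] (hN : Odd N)
    (A : Module.End ℂ (HS N))
    (hcomm : A * parity N PKind.x = parity N PKind.x * A)
    (ε : ℂ) (hε : ε = 1 ∨ ε = -1)
    (hz : parity N PKind.z * A * parity N PKind.z = ε • A)
    (p₁ p₂ : ℝ)
    (u₁ v₁ u₂ v₂ : ℂ)
    (hu₁ : ‖u₁‖ ^ 2 + ‖v₁‖ ^ 2 = 1)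
    (hu₂ : ‖u₂‖ ^ 2 + ‖v₂‖ ^ 2 = 1)
    (g₁ g₂ : HS N)
    (hg₁ : g₁ = u₁ • momState N p₁ + v₁ • parity N PKind.z (momState N p₁))
    (hg₂ : g₂ = u₂ • momState N p₂ + v₂ • parity N PKind.z (momState N p₂)) :
    ‖braket N g₁ (A g₂)‖ ≤
      ‖braket N (momState N p₁) (A (momState N p₂))‖ := by
  set S₁ := momState N p₁
  set S₂ := momState N p₂
  have hcross₁ : braket N (parity N PKind.z S₁) (A S₂) = 0 :=
    braket_parity_z_momState_apply_momState hN hcomm p₁ p₂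
  have hcross₂ : braket N S₁ (A (parity N PKind.z S₂)) = 0 := by
    rw [apply_parity_z_of_parity_z_conj hz, braket_smul_right, ← braket_parity_z_left, hcross₁,
      mul_zero]
  have hdiag :
      braket N (parity N PKind.z S₁) (A (parity N PKind.z S₂)) = ε * braket N S₁ (A S₂) := by
    rw [apply_parity_z_of_parity_z_conj hz, braket_smul_right, braket_parity_z_parity_z]
  have hε' : ‖ε‖ ≤ 1 := by rcases hε with rfl | rfl <;> simp
  rw [hg₁, hg₂, braket_combination_apply, hcross₁, hcross₂, hdiag]
  calc _ = ‖(starRingEnd ℂ) u₁ * u₂ + (starRingEnd ℂ) v₁ * v₂ * ε‖ * ‖braket N S₁ (A S₂)‖ := by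
        rw [← norm_mul]
        ring_nf
    _ ≤ ‖braket N S₁ (A S₂)‖ :=
        mul_le_of_le_one_left (norm_nonneg _)
          (norm_conj_mul_add_conj_mul_mul_le_one hu₁.le hu₂.le hε')

/-- If `A` commutes with `Π^x` and `Π^z A Π^z = εA` with `ε ∈ {±1}`,
then `|⟨g₁|A|g₂⟩| ≤ |⟨s_{p₁}|A|s_{p₂}⟩|`. -/
theorem statement_2 (N : ℕ) [NeZero N] (hN : Odd N)
    (A : Module.End ℂ (HS N))
    (hcomm : A * parity N PKind.x = parity N PKind.x * A)
    (ε : ℂ) (hε : ε = 1 ∨ ε = -1)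
    (hz : parity N PKind.z * A * parity N PKind.z = ε • A)
    (k₁ k₂ : ℕ) (hk₁ : k₁ < N) (hk₂ : k₂ < N)
    (p₁ p₂ : ℝ) (hp₁ : p₁ = 2 * Real.pi * k₁ / N) (hp₂ : p₂ = 2 * Real.pi * k₂ / N)
    (u₁ v₁ u₂ v₂ : ℂ)
    (hu₁ : ‖u₁‖ ^ 2 + ‖v₁‖ ^ 2 = 1)
    (hu₂ : ‖u₂‖ ^ 2 + ‖v₂‖ ^ 2 = 1)
    (g₁ g₂ : HS N)
    (hg₁ : g₁ = u₁ • momState N p₁ + v₁ • parity N PKind.z (momState N p₁))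
    (hg₂ : g₂ = u₂ • momState N p₂ + v₂ • parity N PKind.z (momState N p₂)) :
    ‖braket N g₁ (A g₂)‖ ≤
      ‖braket N (momState N p₁) (A (momState N p₂))‖ :=
  statement_2_general N hN A hcomm ε hε hz p₁ p₂ u₁ v₁ u₂ v₂ hu₁ hu₂ g₁ g₂ hg₁ hg₂

end SpinChain
end

section
/- Let A = σ^{α_1}_1 σ^{α_2}_2 ⋯ σ^{α_L}_L with α_k ∈ {0,x,y,z} (σ^0 denoting the identity), where 1 ≤ L ≤ N−2, and suppose at least one α_k ∈ {y,z}. Then for all kink labels j, l ∈ {1,…,N} with L < j < N or L < l < N, the matrix elements vanish: ⟨j| A |l⟩ = 0 and ⟨j| A Π^z |l⟩ = 0. -/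
/-!
In the σ^x-basis a Pauli string is monomial: it sends `e_s` to a multiple of `e_{F s}`, where `F`
flips the spins at the sites carrying σ^y or σ^z, and Π^z flips every spin. Hence
`⟨e_t| T e_s⟩ = 0` unless `F s = t`. The string `A` lives on sites `1, …, L`, so it leaves the
bond `(v, v + 1)` untouched whenever `L < v < N`. The kink configuration of `j` is `+1` on both
ends of the bond `(j, j + 1)`, for odd `N` on no other bond, and it is `-1` on both ends of no
bond. Comparing on the untouched bond of `j` or of `l` separates `F (kink l)` and
`F (-kink l)` from `kink j`; when `j = l`, `F` flips at least one spin.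
-/

open Complex BigOperators Finset

namespace SpinChain

lemma flipAt_apply {N : ℕ} (i : ZMod N) (s : Config N) (k : ZMod N) :
    flipAt N i s k = if k = i then !(s i) else s k :=
  Function.update_apply s i (!(s i)) k

lemma flipAt_involutive {N : ℕ} (i : ZMod N) : Function.Involutive (flipAt N i) := fun s => by
  funext k
  by_cases h : k = i <;> simp [flipAt_apply, h]

def PKind.flips : PKind → Bool
  | PKind.y => true
  | PKind.z => true
  | _ => false

def configAction (N : ℕ) (κ : PKind) (i : ZMod N) (s : Config N) : Config N :=
  if κ.flips then flipAt N i s else s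

lemma configAction_apply_of_ne {N : ℕ} {κ : PKind} {i w : ZMod N} (h : w ≠ i) (s : Config N) :
    configAction N κ i s w = s w := by
  unfold configAction
  split_ifs <;> simp [flipAt_apply, h]

lemma configAction_apply_self {N : ℕ} {κ : PKind} (hflip : κ.flips = true) (i : ZMod N)
    (s : Config N) : configAction N κ i s i = !s i := by
  simp [configAction, hflip, flipAt_apply]

/-- A generalized permutation operator in the basis `e_s`. -/
def IsMonomial (N : ℕ) [NeZero N] (T : Module.End ℂ (HS N)) (F : Config N → Config N) :
    Prop :=
  ∀ s, ∃ c : ℂ, T (basis N s) = c • basis N (F s)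

section Operators

variable {N : ℕ} [NeZero N]

lemma sigmaZ_basis (i : ZMod N) (s : Config N) :
    sigmaZ N i (basis N s) = basis N (flipAt N i s) := by
  funext t
  simp only [sigmaZ, LinearMap.coe_mk, AddHom.coe_mk, basis, (flipAt_involutive i).eq_iff]

lemma sigmaX_basis (i : ZMod N) (s : Config N) :
    sigmaX N i (basis N s) = sgn (s i) • basis N s := by
  funext t
  by_cases h : t = s
  · subst h; rfl
  · simp [sigmaX, basis, h]

lemma isMonomial_pauli (κ : PKind) (i : ZMod N) :
    IsMonomial N (pauli N κ i) (configAction N κ i) := by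
  intro s
  cases κ
  · exact ⟨1, by simp [pauli, configAction, PKind.flips]⟩
  · exact ⟨sgn (s i), by simp [pauli, configAction, PKind.flips, sigmaX_basis]⟩
  · refine ⟨Complex.I * sgn (!(s i)), ?_⟩
    simp [pauli, sigmaY, configAction, PKind.flips, sigmaZ_basis, sigmaX_basis, flipAt_apply,
      smul_smul]
  · exact ⟨1, by simp [pauli, configAction, PKind.flips, sigmaZ_basis]⟩

lemma IsMonomial.one : IsMonomial N 1 id := fun s => ⟨1, by simp⟩

lemma IsMonomial.mul {T U : Module.End ℂ (HS N)} {F G : Config N → Config N}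
    (hT : IsMonomial N T F) (hU : IsMonomial N U G) : IsMonomial N (T * U) (F ∘ G) := by
  intro s
  obtain ⟨c, hc⟩ := hU s
  obtain ⟨d, hd⟩ := hT (G s)
  exact ⟨c * d, by rw [Module.End.mul_apply, hc, map_smul, hd, smul_smul]; rfl⟩

lemma braket_basis_smul_basis_of_ne {t u : Config N} (c : ℂ) (h : u ≠ t) :
    braket N (basis N t) (c • basis N u) = 0 := by
  simp [braket, basis, h]

lemma IsMonomial.braket_basis_eq_zero {T : Module.End ℂ (HS N)} {F : Config N → Config N}
    (hT : IsMonomial N T F) {s t : Config N} (h : F s ≠ t) :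
    braket N (basis N t) (T (basis N s)) = 0 := by
  obtain ⟨c, hc⟩ := hT s
  rw [hc]
  exact braket_basis_smul_basis_of_ne c h

end Operators

section PauliString

variable {N : ℕ} {ι : Type*} (l : List ι) (κ : ι → PKind) (site : ι → ZMod N)

noncomputable def pauliString : Module.End ℂ (HS N) :=
  (l.map fun a => pauli N (κ a) (site a)).prod

def stringAction (s : Config N) : Config N :=
  l.foldr (fun a => configAction N (κ a) (site a)) s

lemma isMonomial_pauliString [NeZero N] :
    IsMonomial N (pauliString l κ site) (stringAction l κ site) := by
  induction l with
  | nil => exact IsMonomial.one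
  | cons a l ih => exact (isMonomial_pauli (κ a) (site a)).mul ih

lemma stringAction_apply_of_forall_ne (w : ZMod N) (hw : ∀ a ∈ l, site a ≠ w) (s : Config N) :
    stringAction l κ site s w = s w := by
  induction l with
  | nil => rfl
  | cons a l ih =>
    change configAction N (κ a) (site a) (stringAction l κ site s) w = s w
    rw [configAction_apply_of_ne (hw a List.mem_cons_self).symm]
    exact ih fun b hb => hw b (List.mem_cons_of_mem a hb)

lemma stringAction_apply_of_mem (hl : (l.map site).Nodup) {a : ι} (ha : a ∈ l)
    (hflip : (κ a).flips = true) (s : Config N) :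
    stringAction l κ site s (site a) = !s (site a) := by
  induction l with
  | nil => simp at ha
  | cons b l ih =>
    rw [List.map_cons, List.nodup_cons] at hl
    change configAction N (κ b) (site b) (stringAction l κ site s) (site a) = !s (site a)
    rcases List.mem_cons.mp ha with rfl | ha
    · have hne : ∀ c ∈ l, site c ≠ site a := fun c hc hca =>
        hl.1 (hca ▸ List.mem_map_of_mem hc)
      rw [configAction_apply_self hflip, stringAction_apply_of_forall_ne l κ site _ hne]
    · have hne : site a ≠ site b := fun hab => hl.1 (hab ▸ List.mem_map_of_mem ha)
      rw [configAction_apply_of_ne hne, ih hl.2 ha]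

end PauliString

lemma kinkConfig_self {N : ℕ} (l : ZMod N) : kinkConfig N l l = true := by
  simp [kinkConfig]

lemma kinkConfig_eq_true_iff {N : ℕ} (l w : ZMod N) :
    kinkConfig N l w = true ↔ (w - l).val = 0 ∨ (w - l).val % 2 = 1 := by
  simp only [kinkConfig, Bool.or_eq_true, beq_iff_eq]

section Kink

variable {N : ℕ} [NeZero N]

lemma val_add_one_sub (w l : ZMod N) : (w + 1 - l).val = ((w - l).val + 1) % N := by
  rw [add_sub_right_comm, ZMod.val_add, ZMod.val_one_eq_one_mod, Nat.add_mod_mod]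

lemma kinkConfig_self_add_one (l : ZMod N) : kinkConfig N l (l + 1) = true := by
  rw [kinkConfig_eq_true_iff, val_add_one_sub, sub_self, ZMod.val_zero, zero_add]
  rcases eq_or_ne N 1 with rfl | hN
  · left; rfl
  · right; rw [Nat.one_mod_eq_one.mpr hN]

lemma kinkConfig_or_kinkConfig_add_one (l w : ZMod N) :
    kinkConfig N l w = true ∨ kinkConfig N l (w + 1) = true := by
  simp only [kinkConfig_eq_true_iff, val_add_one_sub]
  have hlt := ZMod.val_lt (w - l)
  rcases Nat.lt_or_ge ((w - l).val + 1) N with h | h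
  · rw [Nat.mod_eq_of_lt h]; omega
  · rw [show (w - l).val + 1 = N by omega, Nat.mod_self]; omega

/-- For even `N` the bond `(l - 1, l)` would be a second `+1,+1` bond. -/
lemma eq_of_kinkConfig_of_kinkConfig_add_one (hN : Odd N) {l w : ZMod N}
    (hw : kinkConfig N l w = true) (hw1 : kinkConfig N l (w + 1) = true) : w = l := by
  rw [kinkConfig_eq_true_iff] at hw hw1
  rw [val_add_one_sub] at hw1
  obtain ⟨t, rfl⟩ := hN
  have hlt := ZMod.val_lt (w - l)
  rcases hw with h | h
  · exact sub_eq_zero.mp ((ZMod.val_eq_zero _).mp h)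
  · rw [Nat.mod_eq_of_lt (by omega)] at hw1; omega

end Kink

def FixesBond {N : ℕ} (F : Config N → Config N) (w : ZMod N) : Prop :=
  ∀ s, F s w = s w ∧ F s (w + 1) = s (w + 1)

section KinkMatrixElements

variable {N : ℕ} [NeZero N] {F : Config N → Config N} {j l : ZMod N}

lemma map_kinkConfig_ne_kinkConfig (hN : Odd N) (hF : ∀ s, F s ≠ s)
    (hfix : FixesBond F j ∨ FixesBond F l) : F (kinkConfig N l) ≠ kinkConfig N j := by
  obtain rfl | hjl := eq_or_ne j l
  · exact hF _
  intro heq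
  rcases hfix with hfix | hfix
  · obtain ⟨h0, h1⟩ := hfix (kinkConfig N l)
    rw [heq] at h0 h1
    exact hjl (eq_of_kinkConfig_of_kinkConfig_add_one hN
      (h0 ▸ kinkConfig_self j) (h1 ▸ kinkConfig_self_add_one j))
  · obtain ⟨h0, h1⟩ := hfix (kinkConfig N l)
    rw [heq] at h0 h1
    exact hjl (eq_of_kinkConfig_of_kinkConfig_add_one hN
      (h0 ▸ kinkConfig_self l) (h1 ▸ kinkConfig_self_add_one l)).symm

lemma map_compl_kinkConfig_ne_kinkConfig (hfix : FixesBond F j ∨ FixesBond F l) :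
    F (fun k => !kinkConfig N l k) ≠ kinkConfig N j := by
  intro heq
  rcases hfix with hfix | hfix
  · obtain ⟨h0, h1⟩ := hfix fun k => !kinkConfig N l k
    rw [heq, kinkConfig_self] at h0
    rw [heq, kinkConfig_self_add_one] at h1
    revert h0 h1
    rcases kinkConfig_or_kinkConfig_add_one l j with h | h <;> simp [h]
  · obtain ⟨h0, h1⟩ := hfix fun k => !kinkConfig N l k
    rw [heq, kinkConfig_self] at h0
    rw [heq, kinkConfig_self_add_one] at h1
    revert h0 h1
    rcases kinkConfig_or_kinkConfig_add_one j l with h | h <;> simp [h]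

end KinkMatrixElements

lemma natCast_injOn_Ioc (N : ℕ) : Set.InjOn (Nat.cast : ℕ → ZMod N) (Set.Ioc 0 N) := by
  intro a ⟨ha0, haN⟩ b ⟨hb0, hbN⟩ hab
  rw [ZMod.natCast_eq_natCast_iff'] at hab
  rcases haN.lt_or_eq with ha | rfl <;> rcases hbN.lt_or_eq with hb | rfl
  · rwa [Nat.mod_eq_of_lt ha, Nat.mod_eq_of_lt hb] at hab
  · rw [Nat.mod_eq_of_lt ha, Nat.mod_self] at hab; omega
  · rw [Nat.mod_self, Nat.mod_eq_of_lt hb] at hab; omega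
  · rfl

lemma isMonomial_parity_z (N : ℕ) [NeZero N] :
    IsMonomial N (parity N PKind.z) fun s k => !s k := by
  set site : ℕ → ZMod N := fun m => ((m + 1 : ℕ) : ZMod N)
  have hnodup : ((List.range N).map site).Nodup :=
    List.nodup_range.map_on fun m hm m' hm' h => by
      have := natCast_injOn_Ioc N ⟨m.succ_pos, List.mem_range.mp hm⟩
        ⟨m'.succ_pos, List.mem_range.mp hm'⟩ h
      omega
  have hflip : stringAction (List.range N) (fun _ => PKind.z) site = fun s k => !s k := by
    funext s w
    have hw : site (w - 1).val = w := by simp [site]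
    rw [← hw]
    exact stringAction_apply_of_mem _ _ site hnodup (List.mem_range.mpr (ZMod.val_lt _)) rfl s
  rw [← hflip]
  exact isMonomial_pauliString _ _ _

section InitialSites

variable {N L : ℕ} (α : Fin L → PKind)

lemma nodup_map_finRange_natCast_succ (hLN : L < N) :
    ((List.finRange L).map fun k : Fin L => (((k : ℕ) + 1 : ℕ) : ZMod N)).Nodup :=
  (List.nodup_finRange L).map fun k k' hkk' => Fin.ext <| Nat.succ_injective <|
    natCast_injOn_Ioc N ⟨k.val.succ_pos, by omega⟩ ⟨k'.val.succ_pos, by omega⟩ hkk'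

lemma fixesBond_stringAction_finRange {v : ℕ} (hLv : L < v) (hvN : v < N) :
    FixesBond (stringAction (List.finRange L) α fun k => (((k : ℕ) + 1 : ℕ) : ZMod N)) v := by
  have hoff : ∀ u : ℕ, L < u → u ≤ N →
      ∀ k ∈ List.finRange L, (((k : ℕ) + 1 : ℕ) : ZMod N) ≠ u := by
    intro u hLu huN k _ hk
    have := natCast_injOn_Ioc N ⟨k.val.succ_pos, by omega⟩ ⟨by omega, huN⟩ hk
    omega
  intro s
  refine ⟨stringAction_apply_of_forall_ne _ α _ _ (hoff v hLv hvN.le) s, ?_⟩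
  exact_mod_cast stringAction_apply_of_forall_ne _ α _ _ (hoff (v + 1) (by omega) hvN) s

lemma stringAction_finRange_ne_self [NeZero N] (hLN : L < N)
    (hα : ∃ k, α k = PKind.y ∨ α k = PKind.z) (s : Config N) :
    stringAction (List.finRange L) α (fun k => (((k : ℕ) + 1 : ℕ) : ZMod N)) s ≠ s := by
  obtain ⟨k, hk⟩ := hα
  intro hs
  have hflip := stringAction_apply_of_mem _ α _ (nodup_map_finRange_natCast_succ hLN)
    (List.mem_finRange k) (by rcases hk with hk | hk <;> simp [hk, PKind.flips]) s
  rw [hs] at hflip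
  simp at hflip

end InitialSites

theorem statement_5_general (N : ℕ) [NeZero N] (hN : Odd N) (L : ℕ)
    (α : Fin L → PKind) (hα : ∃ k, α k = PKind.y ∨ α k = PKind.z)
    (A : Module.End ℂ (HS N))
    (hA : A = ((List.finRange L).map
      (fun k => pauli N (α k) (((k : ℕ) + 1 : ℕ) : ZMod N))).prod)
    (j l : ℕ)
    (h : (L < j ∧ j < N) ∨ (L < l ∧ l < N)) :
    braket N (kink N (j : ZMod N)) (A (kink N (l : ZMod N))) = 0 ∧
    braket N (kink N (j : ZMod N)) ((A * parity N PKind.z) (kink N (l : ZMod N))) = 0 := by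
  have hL : L < N := by omega
  subst hA
  have hmono :=
    isMonomial_pauliString (N := N) (List.finRange L) α fun k => ((k + 1 : ℕ) : ZMod N)
  have hbond := h.imp (fun h => fixesBond_stringAction_finRange α h.1 h.2)
    (fun h => fixesBond_stringAction_finRange α h.1 h.2)
  exact ⟨hmono.braket_basis_eq_zero <| map_kinkConfig_ne_kinkConfig hN
      (stringAction_finRange_ne_self α hL hα) hbond,
    (hmono.mul (isMonomial_parity_z N)).braket_basis_eq_zero <|
      map_compl_kinkConfig_ne_kinkConfig hbond⟩

/-- For `A = σ^{α₁}_1 ⋯ σ^{α_L}_L` with at least one `α_k ∈ {y,z}` and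
`1 ≤ L ≤ N−2`, if `L < j < N` or `L < l < N` then `⟨j|A|l⟩ = 0` and `⟨j|AΠ^z|l⟩ = 0`. -/
theorem statement_5 (N : ℕ) [NeZero N] (hN : Odd N)
    (L : ℕ) (hL1 : 1 ≤ L) (hLN : L + 2 ≤ N)
    (α : Fin L → PKind) (hα : ∃ k, α k = PKind.y ∨ α k = PKind.z)
    (A : Module.End ℂ (HS N))
    (hA : A = ((List.finRange L).map
      (fun k => pauli N (α k) (((k : ℕ) + 1 : ℕ) : ZMod N))).prod)
    (j l : ℕ) (hj1 : 1 ≤ j) (hjN : j ≤ N) (hl1 : 1 ≤ l) (hlN : l ≤ N)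
    (h : (L < j ∧ j < N) ∨ (L < l ∧ l < N)) :
    braket N (kink N (j : ZMod N)) (A (kink N (l : ZMod N))) = 0 ∧
    braket N (kink N (j : ZMod N)) ((A * parity N PKind.z) (kink N (l : ZMod N))) = 0 :=
  statement_5_general N hN L α hα A hA j l h

end SpinChain
end

section
/- Fix momenta p_1 = 2πk_1/N, p_2 = 2πk_2/N with k_1, k_2 ∈ {0,…,N−1}, a phase θ ∈ ℝ, and let |g⟩ = (|s_{p_1}⟩ + e^{iθ}|s_{p_2}⟩)/√2. Then there exist a phase θ' ∈ ℝ (depending only on θ, p_1, p_2) and a constant C > 0 independent of N, j and θ such that for every site j ∈ {1,…,N}: |⟨g| σ^x_j |g⟩ − cos((p_1−p_2)j + θ')/(N·|cos((p_1−p_2)/2)|)| ≤ C/N. -/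
open Complex BigOperators Finset

namespace SpinChain

/-!
In the kink basis `|g⟩` has amplitudes `(e^{ip₁m} + e^{iθ} e^{ip₂m}) / √(2N)`, and `σ^x_j` is
diagonal there, with eigenvalue `s^{(m)}(j)` on `|m⟩`. Hence `⟨g|σ^x_j|g⟩` is
`(2N)⁻¹ ∑_m s^{(m)}(j) (2 + e^{-iθ} w^m + e^{iθ} w^{-m})` with `w = e^{i(p₁ - p₂)}`, `w^N = 1`.
Seen from the kink the spins alternate, apart from the ferromagnetic bond, so
`∑_m s^{(m)}(j) w^m` is a geometric sum, equal to `2 w^j / (w + 1)` because `N` is odd. This gives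
`⟨g|σ^x_j|g⟩ = 1/N + cos(Δj - Δ/2 - θ) / (N cos(Δ/2))` exactly, with `Δ = p₁ - p₂`, so `C = 1`
works; a negative `cos(Δ/2)` is absorbed into `θ'` by a shift of `π`.
-/

open scoped ComplexConjugate

section ZModSums

variable {N : ℕ}

lemma pow_val_natCast {M : Type*} [Monoid M] {w : M} (hw : w ^ N = 1) (n : ℕ) :
    w ^ (n : ZMod N).val = w ^ n := by
  rw [ZMod.val_natCast, ← pow_eq_pow_mod n hw]

variable [NeZero N]

lemma pow_val_sub_mul_pow_val {M : Type*} [Monoid M] {w : M} (hw : w ^ N = 1) (a b : ZMod N) :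
    w ^ (a - b).val * w ^ b.val = w ^ a.val := by
  rw [← pow_add, ← pow_val_natCast hw, Nat.cast_add, ZMod.natCast_zmod_val, ZMod.natCast_zmod_val,
    sub_add_cancel]

lemma sum_univ_val_eq_sum_range {M : Type*} [AddCommMonoid M] (h : ℕ → M) :
    ∑ v : ZMod N, h v.val = ∑ n ∈ range N, h n :=
  sum_nbij' ZMod.val Nat.cast (fun v _ => mem_range.2 v.val_lt) (fun _ _ => mem_univ _)
    (fun v _ => ZMod.natCast_zmod_val v) (fun _ hn => ZMod.val_cast_of_lt (mem_range.1 hn))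
    (fun _ _ => rfl)

lemma sum_range_natCast_succ {M : Type*} [AddCommGroup M] (h : ZMod N → M) :
    ∑ m ∈ range N, h ((m + 1 : ℕ) : ZMod N) = ∑ v, h v := by
  have hshift := (sum_range_succ' (fun m : ℕ => h m) N).symm.trans
    (sum_range_succ (fun m : ℕ => h m) N)
  rw [ZMod.natCast_self, Nat.cast_zero, add_left_inj] at hshift
  rw [hshift, ← sum_univ_val_eq_sum_range (fun n => h n)]
  simp_rw [ZMod.natCast_zmod_val]

end ZModSums

lemma add_one_ne_zero_of_pow_eq_one {N : ℕ} (hN : Odd N) {w : ℂ} (hw : w ^ N = 1) : w + 1 ≠ 0 := by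
  intro h
  rw [eq_neg_of_add_eq_zero_left h, hN.neg_one_pow] at hw
  norm_num at hw

-- `kinkSign n` is the spin `s^{(i)}(i + n)` of the kink state `|i⟩`, for `0 ≤ n < N`.
def kinkSign (n : ℕ) : ℂ := if n = 0 then 1 else -(-1) ^ n

lemma sum_range_kinkSign_mul_pow {N : ℕ} (hN : Odd N) {z : ℂ} (hz : z ^ N = 1) :
    ∑ n ∈ range N, kinkSign n * z ^ n = 2 * z / (z + 1) := by
  have hz1 := add_one_ne_zero_of_pow_eq_one hN hz
  have hz1' : -z - 1 ≠ 0 := by intro h; apply hz1; linear_combination -h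
  have hsign : ∀ n, kinkSign n * z ^ n = (if n = 0 then 2 else 0) - (-z) ^ n := by
    intro n
    unfold kinkSign
    split_ifs with h
    · subst h; norm_num
    · rw [neg_pow]; ring
  have hgeom : ∑ n ∈ range N, (-z) ^ n = 2 / (z + 1) := by
    rw [geom_sum_eq (by intro h; apply hz1'; rw [h]; ring), hN.neg_pow, hz]
    field_simp
    ring
  simp only [hsign, sum_sub_distrib, sum_ite_eq', mem_range, hN.pos, if_true, hgeom]
  field_simp
  ring

lemma exp_div_exp_add_one_add_conj (y Δ : ℝ) :
    exp (I * y) / (exp (I * Δ) + 1) + exp (-(I * y)) / (exp (-(I * Δ)) + 1) =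
      ((Real.cos (y - Δ / 2) / Real.cos (Δ / 2) : ℝ) : ℂ) := by
  have hcos : ∀ x : ℝ, (Real.cos x : ℂ) = (exp (I * x) + (exp (I * x))⁻¹) / 2 := fun x => by
    rw [ofReal_cos, Complex.cos, ← exp_neg]; ring_nf
  have hΔ : exp (I * Δ) = exp (I * (Δ / 2 : ℝ)) ^ 2 := by rw [← exp_nat_mul]; push_cast; ring_nf
  have hy : exp (I * y) = exp (I * (Δ / 2 : ℝ)) * exp (I * (y - Δ / 2 : ℝ)) := by
    rw [← exp_add]; push_cast; ring_nf
  rw [ofReal_div, hcos, hcos, exp_neg, exp_neg, hΔ, hy]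
  have hE := exp_ne_zero (I * (Δ / 2 : ℝ))
  have hF := exp_ne_zero (I * (y - Δ / 2 : ℝ))
  generalize exp (I * (Δ / 2 : ℝ)) = E at hE ⊢
  generalize exp (I * (y - Δ / 2 : ℝ)) = F at hF ⊢
  rw [show E + E⁻¹ = (E ^ 2 + 1) / E by field_simp,
    show (E ^ 2)⁻¹ + 1 = (E ^ 2 + 1) / E ^ 2 by field_simp; ring]
  by_cases h0 : E ^ 2 + 1 = 0
  · -- `cos (Δ / 2) = 0`: both sides are junk values `x / 0 = 0`
    simp [h0]
  · field_simp

lemma conj_mul_self_pow_add_mul_pow {u v t : ℂ} (hu : ‖u‖ = 1) (hv : ‖v‖ = 1) (ht : ‖t‖ = 1)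
    (n : ℕ) :
    conj (u ^ n + t * v ^ n) * (u ^ n + t * v ^ n) =
      2 + t * (u⁻¹ * v) ^ n + t⁻¹ * (u * v⁻¹) ^ n := by
  have hne : ∀ {z : ℂ}, ‖z‖ = 1 → z ≠ 0 := fun hz => norm_ne_zero_iff.1 (by simp [hz])
  simp only [map_add, map_mul, map_pow, ← inv_eq_conj hu, ← inv_eq_conj hv, ← inv_eq_conj ht,
    mul_pow, inv_pow]
  field_simp [hne hu, hne hv, hne ht]
  ring

lemma cos_div_eq_cos_add_div_abs (x c : ℝ) :
    Real.cos x / c = Real.cos (x + if 0 ≤ c then 0 else Real.pi) / |c| := by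
  split_ifs with hc
  · rw [add_zero, abs_of_nonneg hc]
  · rw [Real.cos_add_pi, abs_of_neg (not_le.1 hc), div_neg, neg_div, neg_neg]

lemma exp_I_mul_two_pi_mul_div_pow (k N : ℕ) [NeZero N] :
    exp (I * (2 * Real.pi * k / N : ℝ)) ^ N = 1 := by
  rw [← exp_nat_mul, ← exp_nat_mul_two_pi_mul_I k]
  congr 1
  push_cast
  field_simp [NeZero.ne N]

section Kinks

variable (N : ℕ)

lemma sgn_kinkConfig_sub (j r : ZMod N) :
    sgn (kinkConfig N (j - r) j) = kinkSign r.val := by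
  rcases Nat.even_or_odd r.val with he | ho
  · by_cases h0 : r.val = 0 <;>
      simp [kinkConfig, sgn, kinkSign, h0, he.neg_one_pow, Nat.even_iff.1 he]
  · simp [kinkConfig, sgn, kinkSign, ho.neg_one_pow, Nat.odd_iff.1 ho, ho.pos.ne']

variable [NeZero N]

lemma kinkConfig_injective (hN : Odd N) : Function.Injective (kinkConfig N) := by
  -- the kink at `a` is the only one with spin up at both `a` and `a + 1`
  intro a b h
  have ha := congrFun h a
  have ha1 := congrFun h (a + 1)
  simp only [kinkConfig, sub_self, ZMod.val_zero, add_sub_cancel_left] at ha ha1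
  rw [show a + 1 - b = (a - b) + 1 by ring, ZMod.val_add] at ha1
  rw [← sub_eq_zero, ← ZMod.val_eq_zero]
  have hlt := (a - b).val_lt
  obtain ⟨k, rfl⟩ := hN
  rcases Nat.eq_zero_or_pos k with rfl | hk
  · omega
  rw [ZMod.val_one_eq_one_mod, Nat.mod_eq_of_lt (by omega : 1 < 2 * k + 1)] at ha1
  simp only [beq_self_eq_true, Bool.true_or, Bool.true_eq, Bool.or_eq_true, beq_iff_eq] at ha
  rcases ha with h0 | hodd
  · exact h0
  have hlt' : (a - b).val + 1 < 2 * k + 1 := by omega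
  simp [Nat.mod_eq_of_lt hlt'] at ha1
  omega

lemma braket_kink_left (v : ZMod N) (g : HS N) :
    braket N (kink N v) g = g (kinkConfig N v) := by
  simp [braket, kink, basis]

lemma braket_sum_smul_left {ι : Type*} (t : Finset ι) (a : ι → ℂ) (f : ι → HS N) (g : HS N) :
    braket N (∑ i ∈ t, a i • f i) g = ∑ i ∈ t, conj (a i) * braket N (f i) g := by
  simp only [braket, Finset.sum_apply, Pi.smul_apply, smul_eq_mul, map_sum, map_mul, sum_mul,
    mul_sum, mul_assoc]
  exact sum_comm

lemma sum_smul_kink_apply_kinkConfig (hN : Odd N) (a : ZMod N → ℂ) (v : ZMod N) :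
    (∑ w, a w • kink N w) (kinkConfig N v) = a v := by
  simp [kink, basis, (kinkConfig_injective N hN).eq_iff]

lemma sigmaX_kink (j v : ZMod N) :
    sigmaX N j (kink N v) = sgn (kinkConfig N v j) • kink N v := by
  ext s
  by_cases h : s = kinkConfig N v <;> simp [sigmaX, kink, basis, h]

lemma braket_sum_smul_kink_sigmaX (hN : Odd N) (a : ZMod N → ℂ) (j : ZMod N) :
    braket N (∑ v, a v • kink N v) (sigmaX N j (∑ v, a v • kink N v)) =
      ∑ v, sgn (kinkConfig N v j) * (conj (a v) * a v) := by
  simp only [map_sum, map_smul, sigmaX_kink, smul_smul, braket_sum_smul_left, braket_kink_left,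
    sum_smul_kink_apply_kinkConfig N hN]
  exact sum_congr rfl fun v _ => by ring

lemma sum_sgn_kinkConfig_mul_pow (hN : Odd N) {w : ℂ} (hw : w ^ N = 1) (j : ZMod N) :
    ∑ v, sgn (kinkConfig N v j) * w ^ v.val = 2 * w ^ j.val / (w + 1) := by
  have hw0 : w ≠ 0 := by rintro rfl; simp [NeZero.ne N] at hw
  have hpow : ∀ r : ZMod N, w ^ (j - r).val = w ^ j.val * w⁻¹ ^ r.val := fun r => by
    rw [← pow_val_sub_mul_pow_val hw j r, inv_pow, mul_inv_cancel_right₀ (pow_ne_zero _ hw0)]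
  calc ∑ v, sgn (kinkConfig N v j) * w ^ v.val
      = ∑ r, sgn (kinkConfig N (j - r) j) * w ^ (j - r).val :=
        ((Equiv.subLeft j).sum_comp fun v => sgn (kinkConfig N v j) * w ^ v.val).symm
    _ = w ^ j.val * ∑ n ∈ range N, kinkSign n * w⁻¹ ^ n := by
        rw [← sum_univ_val_eq_sum_range, mul_sum]
        exact sum_congr rfl fun r _ => by rw [sgn_kinkConfig_sub, hpow]; ring
    _ = 2 * w ^ j.val / (w + 1) := by
        have hinv : w⁻¹ + 1 = (w + 1) / w := by field_simp; ring
        rw [sum_range_kinkSign_mul_pow hN (by rw [inv_pow, hw, inv_one]), hinv]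
        field_simp

lemma braket_sum_twoWave_smul_kink_sigmaX (hN : Odd N) {u v t : ℂ} (hu : u ^ N = 1)
    (hv : v ^ N = 1) (ht : ‖t‖ = 1) (c : ℂ) (j : ZMod N) :
    braket N (∑ x, (c * (u ^ x.val + t * v ^ x.val)) • kink N x)
        (sigmaX N j (∑ x, (c * (u ^ x.val + t * v ^ x.val)) • kink N x)) =
      conj c * c * (2 + t * (2 * (u⁻¹ * v) ^ j.val / (u⁻¹ * v + 1)) +
        t⁻¹ * (2 * (u * v⁻¹) ^ j.val / (u * v⁻¹ + 1))) := by
  have hroot : ∀ w : ℂ, w = u⁻¹ * v ∨ w = u * v⁻¹ → w ^ N = 1 := by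
    rintro w (rfl | rfl) <;> simp [mul_pow, hu, hv]
  have hsplit : ∀ x : ZMod N, sgn (kinkConfig N x j) *
      (conj c * c * (2 + t * (u⁻¹ * v) ^ x.val + t⁻¹ * (u * v⁻¹) ^ x.val)) =
      conj c * c * (2 * (sgn (kinkConfig N x j) * 1 ^ x.val) +
        t * (sgn (kinkConfig N x j) * (u⁻¹ * v) ^ x.val) +
        t⁻¹ * (sgn (kinkConfig N x j) * (u * v⁻¹) ^ x.val)) := fun x => by ring
  simp only [braket_sum_smul_kink_sigmaX N hN, map_mul, mul_mul_mul_comm (conj c),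
    conj_mul_self_pow_add_mul_pow (norm_eq_one_of_pow_eq_one hu (NeZero.ne N))
      (norm_eq_one_of_pow_eq_one hv (NeZero.ne N)) ht, hsplit, ← mul_sum, sum_add_distrib]
  rw [sum_sgn_kinkConfig_mul_pow N hN (one_pow N),
    sum_sgn_kinkConfig_mul_pow N hN (hroot _ (.inl rfl)),
    sum_sgn_kinkConfig_mul_pow N hN (hroot _ (.inr rfl))]
  ring

lemma momState_eq_sum {p : ℝ} (hp : exp (I * p) ^ N = 1) :
    momState N p = (Real.sqrt N : ℂ)⁻¹ • ∑ v, exp (I * p) ^ v.val • kink N v := by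
  rw [momState, ← sum_range_natCast_succ (fun v => exp (I * p) ^ v.val • kink N v)]
  congr 1
  refine sum_congr rfl fun m _ => ?_
  rw [pow_val_natCast hp, ← exp_nat_mul]
  push_cast
  ring_nf

theorem braket_superposition_sigmaX (hN : Odd N) {p₁ p₂ : ℝ} (hp₁ : exp (I * p₁) ^ N = 1)
    (hp₂ : exp (I * p₂) ^ N = 1) (θ : ℝ) {g : HS N}
    (hg : g = (Real.sqrt 2 : ℂ)⁻¹ • (momState N p₁ + exp (I * θ) • momState N p₂)) (j : ℕ) :
    braket N g (sigmaX N j g) =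
      ((1 + Real.cos ((p₁ - p₂) * j - (p₁ - p₂) / 2 - θ) / Real.cos ((p₁ - p₂) / 2)) / N : ℝ) := by
  set u := exp (I * p₁)
  set v := exp (I * p₂)
  set t := exp (I * θ)
  set c : ℂ := (Real.sqrt 2 : ℂ)⁻¹ * (Real.sqrt N : ℂ)⁻¹
  have hamp : g = ∑ x, (c * (u ^ x.val + t * v ^ x.val)) • kink N x := by
    rw [hg, momState_eq_sum N hp₁, momState_eq_sum N hp₂]
    simp only [smul_sum, ← sum_add_distrib, smul_smul, ← add_smul]
    exact sum_congr rfl fun x _ => by congr 1; ring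
  have hc : conj c * c = (2 * N : ℂ)⁻¹ := by
    have h2 : ((Real.sqrt 2 : ℝ) : ℂ) ^ 2 = 2 := by
      rw [← ofReal_pow, Real.sq_sqrt zero_le_two]; norm_num
    have hN2 : ((Real.sqrt N : ℝ) : ℂ) ^ 2 = N := by
      rw [← ofReal_pow, Real.sq_sqrt (Nat.cast_nonneg N)]; norm_num
    simp only [c, map_mul, map_inv₀, conj_ofReal]
    rw [← h2, ← hN2]
    ring
  have hW : u * v⁻¹ = exp (I * (p₁ - p₂ : ℝ)) := by
    rw [← exp_neg, ← exp_add]; push_cast; ring_nf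
  have hW' : u⁻¹ * v = exp (-(I * (p₁ - p₂ : ℝ))) := by
    rw [← exp_neg, ← exp_add]; push_cast; ring_nf
  have hy : t⁻¹ * exp (I * (p₁ - p₂ : ℝ)) ^ j = exp (I * ((p₁ - p₂) * j - θ : ℝ)) := by
    rw [← exp_neg, ← exp_nat_mul, ← exp_add]; push_cast; ring_nf
  have hy' : t * exp (-(I * (p₁ - p₂ : ℝ))) ^ j = exp (-(I * ((p₁ - p₂) * j - θ : ℝ))) := by
    rw [← exp_nat_mul, ← exp_add]; push_cast; ring_nf
  have hWN : (u * v⁻¹) ^ N = 1 := by rw [mul_pow, inv_pow, hp₁, hp₂, inv_one, one_mul]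
  have hWN' : (u⁻¹ * v) ^ N = 1 := by rw [mul_pow, inv_pow, hp₁, hp₂, inv_one, one_mul]
  rw [hamp, braket_sum_twoWave_smul_kink_sigmaX N hN hp₁ hp₂ (norm_exp_I_mul_ofReal θ), hc,
    pow_val_natCast hWN, pow_val_natCast hWN',
    show (p₁ - p₂) * j - (p₁ - p₂) / 2 - θ = ((p₁ - p₂) * j - θ) - (p₁ - p₂) / 2 by ring,
    ofReal_div, ofReal_add, ofReal_one, ofReal_natCast,
    ← exp_div_exp_add_one_add_conj, ← hy, ← hy', hW, hW']
  ring

end Kinks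

/-- For `|g⟩ = (|s_{p₁}⟩ + e^{iθ}|s_{p₂}⟩)/√2` there are a phase `θ'`
(depending only on `θ, p₁, p₂`) and a constant `C > 0` independent of `N`, `j` and `θ`
such that for every site `j ∈ {1,…,N}`:
`|⟨g|σ^x_j|g⟩ − cos((p₁−p₂)j + θ')/(N·|cos((p₁−p₂)/2)|)| ≤ C/N`. -/
theorem statement_11 :
    ∃ C : ℝ, 0 < C ∧
      ∀ (N : ℕ) [NeZero N], Odd N →
        ∀ k₁ k₂ : ℕ, k₁ < N → k₂ < N →
          ∀ p₁ p₂ : ℝ, p₁ = 2 * Real.pi * k₁ / N → p₂ = 2 * Real.pi * k₂ / N →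
            ∀ θ : ℝ, ∃ θ' : ℝ,
              ∀ g : HS N,
                g = (Real.sqrt 2 : ℂ)⁻¹ •
                    (momState N p₁ + Complex.exp (Complex.I * θ) • momState N p₂) →
                ∀ j : ℕ, 1 ≤ j → j ≤ N →
                  ‖braket N g (sigmaX N (j : ZMod N) g) -
                      ((Real.cos ((p₁ - p₂) * j + θ') /
                        (N * |Real.cos ((p₁ - p₂) / 2)|) : ℝ) : ℂ)‖ ≤ C / N := by
  refine ⟨1, one_pos, fun N _ hN k₁ k₂ _ _ p₁ p₂ hp₁ hp₂ θ => ?_⟩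
  set c := Real.cos ((p₁ - p₂) / 2)
  refine ⟨-θ - (p₁ - p₂) / 2 + if 0 ≤ c then 0 else Real.pi, fun g hg j _ _ => ?_⟩
  have hroot₁ := exp_I_mul_two_pi_mul_div_pow k₁ N
  have hroot₂ := exp_I_mul_two_pi_mul_div_pow k₂ N
  rw [← hp₁] at hroot₁
  rw [← hp₂] at hroot₂
  rw [braket_superposition_sigmaX N hN hroot₁ hroot₂ θ hg j, div_mul_eq_div_div_swap,
    show (p₁ - p₂) * j + (-θ - (p₁ - p₂) / 2 + if 0 ≤ c then 0 else Real.pi) =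
      (p₁ - p₂) * j - (p₁ - p₂) / 2 - θ + if 0 ≤ c then 0 else Real.pi by ring,
    ← cos_div_eq_cos_add_div_abs, ← ofReal_sub, norm_real, ← sub_div, add_sub_cancel_right,
    Real.norm_eq_abs, abs_of_nonneg (by positivity)]

end SpinChain
end

section
/- The function f(j) = cos(2πmj/N) attains its minimal value over {0,1,…,N−1}, which equals −cos(πg/N), at exactly 2g points of the set {0,1,…,N−1}. -/
/-!
Write `N = g n`, `m = g a` with `a` coprime to `n = 2t + 1`. Then
`cos (2π m j / N) = cos (2π k / n)` with `k = a j mod n`, and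
`cos (2π k / n) = -cos (π |n - 2k| / n)`. Since `n - 2k` is odd with
`|n - 2k| ≤ n`, monotonicity of `cos` on `[0, π]` gives the bound, with equality exactly for
`k ∈ {t, t + 1}`. As `a` is a unit mod `n`, each of these residues occurs once in every block of
`n` consecutive `j`, hence `g` times in `{0, …, N - 1}`.
-/

open Finset Real

theorem card_filter_range_mul_zmod (g n : ℕ) [NeZero n] (P : ZMod n → Prop) [DecidablePred P] :
    #{j ∈ range (g * n) | P (j : ℕ)} = g * #{x | P x} := by
  have hn := NeZero.pos n
  calc #{j ∈ range (g * n) | P (j : ℕ)} = #(range g ×ˢ ({x | P x} : Finset (ZMod n))) := by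
        apply card_nbij' (fun j => (j / n, (j : ZMod n))) (fun p => p.1 * n + p.2.val)
        · intro j hj
          simp only [mem_coe, mem_filter, mem_product, mem_range, mem_univ, true_and] at hj ⊢
          exact ⟨Nat.div_lt_of_lt_mul (by linarith [hj.1]), hj.2⟩
        · rintro ⟨q, x⟩ hqx
          simp only [mem_coe, mem_filter, mem_product, mem_range, mem_univ, true_and] at hqx ⊢
          refine ⟨?_, by simpa using hqx.2⟩
          nlinarith [ZMod.val_lt x]
        · intro j _
          simp [ZMod.val_natCast, Nat.div_add_mod']
        · rintro ⟨q, x⟩ _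
          simp only [Nat.cast_add, Nat.cast_mul, ZMod.natCast_self, mul_zero, zero_add,
            ZMod.natCast_zmod_val, Prod.mk.injEq, and_true]
          rw [Nat.add_comm, Nat.add_mul_div_right _ _ hn, Nat.div_eq_of_lt (ZMod.val_lt x),
            zero_add]
    _ = g * #{x | P x} := by rw [card_product, card_range]

theorem card_filter_units_mul_eq_or_mul_eq {R : Type*} [Ring R] [Fintype R] [DecidableEq R]
    (u : Rˣ) {a b : R} (hab : a ≠ b) : #{x | (u : R) * x = a ∨ (u : R) * x = b} = 2 := by
  have : ({x | (u : R) * x = a ∨ (u : R) * x = b} : Finset R) = {u⁻¹ * a, u⁻¹ * b} := by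
    ext x
    simp only [mem_filter, mem_univ, true_and, mem_insert, mem_singleton,
      Units.eq_inv_mul_iff_mul_eq]
  rw [this, card_pair]
  simpa using hab

theorem cos_two_pi_mul_div_mod (k n : ℕ) :
    cos (2 * π * k / n) = cos (2 * π * (k % n : ℕ) / n) := by
  rcases Nat.eq_zero_or_pos n with rfl | hn
  · simp
  have hk : (k : ℝ) = n * (k / n : ℕ) + (k % n : ℕ) := by
    exact_mod_cast (Nat.div_add_mod k n).symm
  rw [← cos_add_nat_mul_two_pi (2 * π * (k % n : ℕ) / n) (k / n)]
  congr 1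
  field_simp
  linear_combination hk

theorem cos_two_pi_mul_div_eq_neg_cos_abs (k n : ℕ) (hn : n ≠ 0) :
    cos (2 * π * k / n) = -cos (π * |(n : ℝ) - 2 * k| / n) := by
  have hn' : (0 : ℝ) < n := by positivity
  have : π * |(n : ℝ) - 2 * k| / n = |π - 2 * π * k / n| := by
    rw [show π - 2 * π * k / n = π * (n - 2 * k) / n by field_simp, abs_div, abs_mul,
      abs_of_pos pi_pos, abs_of_pos hn']
  rw [this, cos_abs, cos_pi_sub, neg_neg]

theorem strictAntiOn_cos_pi_mul_div {n : ℝ} (hn : 0 < n) :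
    StrictAntiOn (fun x => cos (π * x / n)) (Set.Icc 0 n) := by
  have hmem : ∀ x ∈ Set.Icc 0 n, π * x / n ∈ Set.Icc 0 π := fun x hx =>
    ⟨by have := hx.1; positivity, by rw [div_le_iff₀ hn]; nlinarith [pi_pos, hx.2]⟩
  intro x hx y hy hxy
  exact strictAntiOn_cos (hmem x hx) (hmem y hy) (by gcongr)

theorem abs_sub_two_mul_mem_Icc {n k : ℕ} (hn : Odd n) (hk : k < n) :
    |(n : ℝ) - 2 * k| ∈ Set.Icc 1 (n : ℝ) := by
  obtain ⟨t, ht⟩ := hn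
  have h : (1 : ℤ) ≤ |(n : ℤ) - 2 * k| ∧ |(n : ℤ) - 2 * k| ≤ n := by
    rw [abs_le, le_abs]; omega
  have hcast : ((|(n : ℤ) - 2 * k| : ℤ) : ℝ) = |(n : ℝ) - 2 * k| := by push_cast; rfl
  rw [← hcast]
  exact ⟨by exact_mod_cast h.1, by exact_mod_cast h.2⟩

theorem cos_two_pi_mul_div_eq_neg_cos_pi_div_iff {n k : ℕ} (hn : Odd n) (hk : k < n) :
    cos (2 * π * k / n) = -cos (π / n) ↔ 2 * k + 1 = n ∨ 2 * k = n + 1 := by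
  have hn0 : (0 : ℝ) < n := by exact_mod_cast hn.pos
  have h1 : (1 : ℝ) ∈ Set.Icc 0 (n : ℝ) := ⟨zero_le_one, by exact_mod_cast hn.pos⟩
  have hd := abs_sub_two_mul_mem_Icc hn hk
  rw [cos_two_pi_mul_div_eq_neg_cos_abs k n hn.pos.ne', neg_inj,
    show π / (n : ℝ) = π * 1 / n by rw [mul_one],
    (strictAntiOn_cos_pi_mul_div hn0).eq_iff_eq ⟨zero_le_one.trans hd.1, hd.2⟩ h1,
    eq_comm, abs_eq zero_le_one]
  have hcast₁ : (n : ℝ) - 2 * k = 1 ↔ 2 * k + 1 = n := by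
    rw [← @Nat.cast_inj ℝ]; push_cast; constructor <;> intro h <;> linarith
  have hcast₂ : (n : ℝ) - 2 * k = -1 ↔ 2 * k = n + 1 := by
    rw [← @Nat.cast_inj ℝ]; push_cast; constructor <;> intro h <;> linarith
  rw [hcast₁, hcast₂]

theorem neg_cos_pi_div_le_cos_two_pi_mul_div {n k : ℕ} (hn : Odd n) (hk : k < n) :
    -cos (π / n) ≤ cos (2 * π * k / n) := by
  have hn0 : (0 : ℝ) < n := by exact_mod_cast hn.pos
  have h1 : (1 : ℝ) ∈ Set.Icc 0 (n : ℝ) := ⟨zero_le_one, by exact_mod_cast hn.pos⟩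
  have hd := abs_sub_two_mul_mem_Icc hn hk
  rw [cos_two_pi_mul_div_eq_neg_cos_abs k n hn.pos.ne', neg_le_neg_iff,
    show π / (n : ℝ) = π * 1 / n by rw [mul_one],
    (strictAntiOn_cos_pi_mul_div hn0).le_iff_ge ⟨zero_le_one.trans hd.1, hd.2⟩ h1]
  exact hd.1

theorem cos_two_pi_mul_div_eq_neg_cos_pi_div_iff_zmod {n t : ℕ} (hn : n = 2 * t + 1) (k : ℕ) :
    cos (2 * π * k / n) = -cos (π / n) ↔ (k : ZMod n) = t ∨ (k : ZMod n) = t + 1 := by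
  have hodd : Odd n := ⟨t, hn⟩
  rw [cos_two_pi_mul_div_mod,
    cos_two_pi_mul_div_eq_neg_cos_pi_div_iff hodd (Nat.mod_lt _ hodd.pos), ← Nat.cast_succ,
    ZMod.natCast_eq_natCast_iff', ZMod.natCast_eq_natCast_iff',
    Nat.mod_eq_of_lt (by omega : t < n)]
  rcases Nat.eq_zero_or_pos t with rfl | ht
  · simp [hn, Nat.mod_one]
  rw [Nat.mod_eq_of_lt (by omega : t + 1 < n)]
  omega

open scoped Classical in
theorem statement_14_general (N m : ℕ) (hN : Odd N) (hm0 : 0 < m) (hmN : m < N)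
    (g : ℕ) (hg : g = Nat.gcd N m) :
    (∀ j ∈ Finset.range N,
      -Real.cos (Real.pi * g / N) ≤ Real.cos (2 * Real.pi * m * j / N)) ∧
    ((Finset.range N).filter
        (fun j => Real.cos (2 * Real.pi * m * j / N) = -Real.cos (Real.pi * g / N))).card =
      2 * g := by
  obtain ⟨n, a, hcop, hNn, hma⟩ := Nat.exists_coprime N m
  rw [← hg] at hNn hma
  obtain ⟨t, hnt⟩ : Odd n := (Nat.odd_mul.mp (hNn ▸ hN)).1
  have hn1 : n ≠ 1 := by
    rintro rfl
    rw [one_mul] at hNn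
    exact absurd (Nat.le_of_dvd hm0 (⟨a, by rw [hma, hNn, mul_comm]⟩ : N ∣ m)) (by omega)
  have hg0 : (g : ℝ) ≠ 0 := by have := hg ▸ Nat.gcd_pos_of_pos_left m hN.pos; positivity
  have hcos (j : ℕ) : cos (2 * π * m * j / N) = cos (2 * π * (a * j : ℕ) / n) := by
    rw [hma, hNn]; push_cast; field_simp
  have hπ : π * g / N = π / n := by rw [hNn]; push_cast; field_simp
  constructor
  · intro j _
    rw [hcos, hπ, cos_two_pi_mul_div_mod]
    exact neg_cos_pi_div_le_cos_two_pi_mul_div ⟨t, hnt⟩ (Nat.mod_lt _ (by omega))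
  · have : NeZero n := ⟨by omega⟩
    have : Fact (1 < n) := ⟨by omega⟩
    -- the filtered finset is elaborated as the image of `range N` in `ℝ`
    simp only [Finset.bind_def, Finset.pure_def, Finset.sup_singleton_apply]
    rw [filter_image, card_image_of_injective _ Nat.cast_injective]
    simp only [hcos, hπ, cos_two_pi_mul_div_eq_neg_cos_pi_div_iff_zmod hnt]
    set u := ZMod.unitOfCoprime a hcop.symm
    have hu : (u : ZMod n) = a := ZMod.coe_unitOfCoprime a hcop.symm
    simp only [Nat.cast_mul, ← hu]
    rw [hNn, mul_comm,
      card_filter_range_mul_zmod g n (fun x => (u : ZMod n) * x = t ∨ (u : ZMod n) * x = t + 1),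
      card_filter_units_mul_eq_or_mul_eq u (by simp), mul_comm]

open scoped Classical in
/-- For `N` odd, `0 < m < N`, `g = gcd(N,m)`, the function
`f(j) = cos(2πmj/N)` attains its minimal value over `{0,…,N−1}`, which equals
`−cos(πg/N)`, at exactly `2g` points of `{0,…,N−1}`. -/
theorem statement_14 (N m : ℕ) (hN : Odd N) (hN0 : 0 < N) (hm0 : 0 < m) (hmN : m < N)
    (g : ℕ) (hg : g = Nat.gcd N m) :
    (∀ j ∈ Finset.range N,
      -Real.cos (Real.pi * g / N) ≤ Real.cos (2 * Real.pi * m * j / N)) ∧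
    ((Finset.range N).filter
        (fun j => Real.cos (2 * Real.pi * m * j / N) = -Real.cos (Real.pi * g / N))).card =
      2 * g :=
  statement_14_general N m hN hm0 hmN g hg
end
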